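/- Let A|B|C be a right depth three tower of rings with V = A^C and P = (A ⊗_B A)^C. Then the map p ⊗ p' ↦ p¹ ⊗ p²p'¹ ⊗ p'² gives an isomorphism of abelian groups P ⊗_V P ≅ (A ⊗_B A ⊗_B A)^C, with inverse q¹⊗q²⊗q³ ↦ Σ_i (q¹ ⊗ q²γ_i(q³)) ⊗_V u_i where γ_i, u_i are right D3 quasibases. -/

import Mathlib

open scoped BigOperators

section BTCore

variable {R M N P : Type*} [AddCommGroup M] [AddCommGroup N] [AddCommGroup P]

/-- Relations defining the balanced tensor product of `M` and `N` over the
"scalars" `R`, where `R` acts on the right of `M` via `rho` and on the left of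
`N` via `lam`. -/
inductive BTRel (rho : R → M →+ M) (lam : R → N →+ N) :
    FreeAbelianGroup (M × N) → FreeAbelianGroup (M × N) → Prop
  | addl (m m' : M) (n : N) :
      BTRel rho lam (FreeAbelianGroup.of (m + m', n))
        (FreeAbelianGroup.of (m, n) + FreeAbelianGroup.of (m', n))
  | addr (m : M) (n n' : N) :
      BTRel rho lam (FreeAbelianGroup.of (m, n + n'))
        (FreeAbelianGroup.of (m, n) + FreeAbelianGroup.of (m, n'))
  | bal (r : R) (m : M) (n : N) :
      BTRel rho lam (FreeAbelianGroup.of (rho r m, n))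
        (FreeAbelianGroup.of (m, lam r n))

/-- The balanced tensor product `M ⊗_R N`. -/
def BT (rho : R → M →+ M) (lam : R → N →+ N) : Type _ :=
  (addConGen (BTRel rho lam)).Quotient

namespace BT

variable {rho : R → M →+ M} {lam : R → N →+ N}

instance : AddGroup (BT rho lam) :=
  inferInstanceAs (AddGroup (addConGen (BTRel rho lam)).Quotient)

instance : AddCommGroup (BT rho lam) :=
  { (inferInstance : AddGroup (BT rho lam)) with
    add_comm := fun a b => by
      refine AddCon.induction_on₂ a b fun x y => ?_
      change ((x + y : FreeAbelianGroup (M × N)) :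
        (addConGen (BTRel rho lam)).Quotient) = ((y + x : FreeAbelianGroup (M × N)) : _)
      rw [add_comm] }

/-- The canonical generator `m ⊗ n`. -/
def mk (rho : R → M →+ M) (lam : R → N →+ N) (m : M) (n : N) : BT rho lam :=
  ((FreeAbelianGroup.of (m, n) : FreeAbelianGroup (M × N)) :
    (addConGen (BTRel rho lam)).Quotient)

lemma mk_rel {x y : FreeAbelianGroup (M × N)} (h : BTRel rho lam x y) :
    (x : (addConGen (BTRel rho lam)).Quotient) = (y : _) :=
  (AddCon.eq _).2 (AddConGen.Rel.of _ _ h)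

lemma mk_add_left (m m' : M) (n : N) :
    mk rho lam (m + m') n = mk rho lam m n + mk rho lam m' n := by
  have := mk_rel (BTRel.addl m m' n (rho := rho) (lam := lam))
  exact this

lemma mk_add_right (m : M) (n n' : N) :
    mk rho lam m (n + n') = mk rho lam m n + mk rho lam m n' := by
  have := mk_rel (BTRel.addr m n n' (rho := rho) (lam := lam))
  exact this

lemma mk_bal (r : R) (m : M) (n : N) :
    mk rho lam (rho r m) n = mk rho lam m (lam r n) :=
  mk_rel (BTRel.bal r m n)

/-- Lift a biadditive balanced map to the balanced tensor product. -/
def lift (rho : R → M →+ M) (lam : R → N →+ N) (φ : M → N → P)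
    (h1 : ∀ m m' n, φ (m + m') n = φ m n + φ m' n)
    (h2 : ∀ m n n', φ m (n + n') = φ m n + φ m n')
    (h3 : ∀ r m n, φ (rho r m) n = φ m (lam r n)) : BT rho lam →+ P :=
  AddCon.lift _ (FreeAbelianGroup.lift fun p => φ p.1 p.2)
    (AddCon.addConGen_le.2 (by
      rintro x y h
      cases h with
      | addl m m' n => simp [AddCon.ker_rel, FreeAbelianGroup.lift_apply_of, h1]
      | addr m n n' => simp [AddCon.ker_rel, FreeAbelianGroup.lift_apply_of, h2]
      | bal r m n => simp [AddCon.ker_rel, FreeAbelianGroup.lift_apply_of, h3]))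

@[simp] lemma lift_mk (φ : M → N → P) (h1 h2 h3) (m : M) (n : N) :
    lift rho lam φ h1 h2 h3 (mk rho lam m n) = φ m n := by
  show (addConGen (BTRel rho lam)).lift _ _ ((FreeAbelianGroup.of (m, n) :
    FreeAbelianGroup (M × N)) : (addConGen (BTRel rho lam)).Quotient) = _
  rw [AddCon.lift_coe, FreeAbelianGroup.lift_apply_of]

/-- Induction principle for the balanced tensor product. -/
protected lemma ind {motive : BT rho lam → Prop} (zero : motive 0)
    (mk' : ∀ m n, motive (mk rho lam m n)) (neg : ∀ x, motive x → motive (-x))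
    (add : ∀ x y, motive x → motive y → motive (x + y)) : ∀ x : BT rho lam, motive x := by
  intro x
  refine AddCon.induction_on x fun z => ?_
  induction z using FreeAbelianGroup.induction_on with
  | zero => exact zero
  | of p => exact mk' p.1 p.2
  | neg p h =>
      have : ((-FreeAbelianGroup.of p : FreeAbelianGroup (M × N)) :
          (addConGen (BTRel rho lam)).Quotient) = -(mk rho lam p.1 p.2) := rfl
      rw [this]; exact neg _ (mk' p.1 p.2)
  | add x y hx hy =>
      have : ((x + y : FreeAbelianGroup (M × N)) :
          (addConGen (BTRel rho lam)).Quotient) = (x : _) + (y : _) := rfl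
      rw [this]; exact add _ _ hx hy

lemma hom_ext {f g : BT rho lam →+ P}
    (h : ∀ m n, f (mk rho lam m n) = g (mk rho lam m n)) : f = g := by
  ext x
  refine BT.ind (motive := fun x => f x = g x) ?_ ?_ ?_ ?_ x
  · simp
  · exact h
  · intro y hy; simp [hy]
  · intro y z hy hz; simp [hy, hz]

end BT

end BTCore

section Tensor

variable {B A C P : Type*} [Ring B] [Ring A] [Ring C] [AddCommGroup P]

/-- The tensor product `A ⊗_B A` relative to a ring homomorphism `g : B →+* A`. -/
def Tsr (g : B →+* A) : Type _ :=
  BT (fun b => AddMonoidHom.mulRight (g b)) (fun b => AddMonoidHom.mulLeft (g b))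

instance (g : B →+* A) : AddCommGroup (Tsr g) := inferInstanceAs (AddCommGroup (BT _ _))

namespace Tsr

variable (g : B →+* A)

/-- The generator `x ⊗_B y` of `Tsr g`. -/
def tmk (x y : A) : Tsr g := BT.mk _ _ x y

lemma tmk_add_left (x x' y : A) : tmk g (x + x') y = tmk g x y + tmk g x' y :=
  BT.mk_add_left x x' y

lemma tmk_add_right (x y y' : A) : tmk g x (y + y') = tmk g x y + tmk g x y' :=
  BT.mk_add_right x y y'

lemma tmk_bal (x : A) (b : B) (y : A) : tmk g (x * g b) y = tmk g x (g b * y) :=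
  BT.mk_bal b x y

/-- Lift a biadditive `B`-balanced map `A × A → P` to `Tsr g`. -/
def tlift (φ : A → A → P)
    (h1 : ∀ x x' y, φ (x + x') y = φ x y + φ x' y)
    (h2 : ∀ x y y', φ x (y + y') = φ x y + φ x y')
    (h3 : ∀ x b y, φ (x * g b) y = φ x (g b * y)) : Tsr g →+ P :=
  BT.lift _ _ φ h1 h2 (fun r m n => h3 m r n)

@[simp] lemma tlift_mk (φ : A → A → P) (h1 h2 h3) (x y : A) :
    tlift g φ h1 h2 h3 (tmk g x y) = φ x y :=
  BT.lift_mk φ h1 h2 _ x y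

lemma thom_ext {g : B →+* A} {f f' : Tsr g →+ P}
    (h : ∀ x y, f (tmk g x y) = f' (tmk g x y)) : f = f' :=
  BT.hom_ext h

/-- Left multiplication by `a ∈ A` on the first tensorand. -/
def lmul (a : A) : Tsr g →+ Tsr g :=
  tlift g (fun x y => tmk g (a * x) y)
    (fun x x' y => by rw [mul_add, tmk_add_left])
    (fun x y y' => by rw [tmk_add_right])
    (fun x b y => by rw [← mul_assoc, tmk_bal])

@[simp] lemma lmul_mk (a x y : A) : lmul g a (tmk g x y) = tmk g (a * x) y :=
  tlift_mk g _ _ _ _ x y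

/-- Right multiplication by `a ∈ A` on the second tensorand. -/
def rmul (a : A) : Tsr g →+ Tsr g :=
  tlift g (fun x y => tmk g x (y * a))
    (fun x x' y => by rw [tmk_add_left])
    (fun x y y' => by rw [add_mul, tmk_add_right])
    (fun x b y => by rw [tmk_bal, mul_assoc])

@[simp] lemma rmul_mk (a x y : A) : rmul g a (tmk g x y) = tmk g x (y * a) :=
  tlift_mk g _ _ _ _ x y

lemma lmul_lmul (a a' : A) (p : Tsr g) : lmul g a (lmul g a' p) = lmul g (a * a') p := by
  have : ((lmul g a).comp (lmul g a')) = lmul g (a * a') :=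
    thom_ext fun x y => by simp [mul_assoc]
  exact DFunLike.congr_fun this p

lemma rmul_rmul (a a' : A) (p : Tsr g) : rmul g a (rmul g a' p) = rmul g (a' * a) p := by
  have : ((rmul g a).comp (rmul g a')) = rmul g (a' * a) :=
    thom_ext fun x y => by simp [mul_assoc]
  exact DFunLike.congr_fun this p

lemma lmul_rmul (a a' : A) (p : Tsr g) : lmul g a (rmul g a' p) = rmul g a' (lmul g a p) := by
  have : ((lmul g a).comp (rmul g a')) = (rmul g a').comp (lmul g a) :=
    thom_ext fun x y => by simp
  exact DFunLike.congr_fun this p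

lemma lmul_add_smul (a a' : A) (p : Tsr g) :
    lmul g (a + a') p = lmul g a p + lmul g a' p := by
  have : lmul g (a + a') = lmul g a + lmul g a' :=
    thom_ext fun x y => by simp [add_mul, tmk_add_left]
  rw [this]; rfl

lemma rmul_add_smul (a a' : A) (p : Tsr g) :
    rmul g (a + a') p = rmul g a p + rmul g a' p := by
  have : rmul g (a + a') = rmul g a + rmul g a' :=
    thom_ext fun x y => by simp [mul_add, tmk_add_right]
  rw [this]; rfl

/-- The multiplication map `μ : A ⊗_B A → A`. -/
def mulmap : Tsr g →+ A :=
  tlift g (fun x y => x * y) (fun x x' y => by rw [add_mul])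
    (fun x y y' => by rw [mul_add]) (fun x b y => by rw [mul_assoc])

@[simp] lemma mulmap_mk (x y : A) : mulmap g (tmk g x y) = x * y := tlift_mk g _ _ _ _ x y

end Tsr

section TowerDefs

open Tsr

variable (g : B →+* A) (hC : C →+* A)

/-- `p ∈ (A ⊗_B A)^C` : the `C`-centralizer condition, where `C` maps to `A` via `hC`. -/
def TCent (p : Tsr g) : Prop := ∀ c : C, lmul g (hC c) p = rmul g (hC c) p

/-- `α ∈ End_B A_C` : additive endomorphisms of `A` that are left `B`-linear
(via `g`) and right `C`-linear (via `hC`). -/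
def EndBAC (α : A →+ A) : Prop :=
  (∀ (b : B) (x : A), α (g b * x) = g b * α x) ∧
  ∀ (x : A) (c : C), α (x * hC c) = α x * hC c

/-- The tower is right depth three: `A ⊗_B A` is isomorphic, as `A`-`C`-bimodules,
to a direct summand of `A^n` for some `n`. Here the left `A`-action and right
`C`-action on `A^n` are componentwise, and on `Tsr g` they are `lmul` and `rmul`. -/
def IsRightD3 : Prop :=
  ∃ (n : ℕ) (π : (Fin n → A) →+ Tsr g) (σ : Tsr g →+ (Fin n → A)),
    (∀ (a : A) (v : Fin n → A), π (fun i => a * v i) = lmul g a (π v)) ∧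
    (∀ (c : C) (v : Fin n → A), π (fun i => v i * hC c) = rmul g (hC c) (π v)) ∧
    (∀ (a : A) (p : Tsr g) (i : Fin n), σ (lmul g a p) i = a * σ p i) ∧
    (∀ (c : C) (p : Tsr g) (i : Fin n), σ (rmul g (hC c) p) i = σ p i * hC c) ∧
    (∀ p : Tsr g, π (σ p) = p)

end TowerDefs

end Tensor

open Tsr
section Extra

open Tsr

variable {C B A : Type*} [Ring C] [Ring B] [Ring A] (f : C →+* B) (g : B →+* A)

/-- For `γ` left `B`-linear, the map `A ⊗_B A → A`, `p = p¹ ⊗ p² ↦ p¹ * γ p²`. -/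
def phiMap (γ : A →+ A)
    (hγ : ∀ (b : B) (x : A), γ (g b * x) = g b * γ x) : Tsr g →+ A :=
  tlift g (fun x y => x * γ y)
    (fun x x' y => by rw [add_mul])
    (fun x y y' => by rw [map_add, mul_add])
    (fun x b y => by rw [hγ, mul_assoc])

/-- The centralizer `V = A^C` of the image of `C` in `A`. -/
def Vc : Subring A := Subring.centralizer (Set.range ⇑(g.comp f))

lemma Vc_comm {v : A} (hv : v ∈ Vc f g) (c : C) :
    (g.comp f) c * v = v * (g.comp f) c :=
  Subring.mem_centralizer_iff.mp hv _ ⟨c, rfl⟩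

/-- `P = (A ⊗_B A)^C` as an additive subgroup of `A ⊗_B A`. -/
def PCsub : AddSubgroup (Tsr g) where
  carrier := {p | TCent g (g.comp f) p}
  add_mem' := fun hp hq c => by simp only [map_add, hp c, hq c]
  zero_mem' := fun c => by simp
  neg_mem' := fun hp c => by simp only [map_neg, hp c]

lemma cent_lmul {v : A} (hv : ∀ c : C, (g.comp f) c * v = v * (g.comp f) c)
    {p : Tsr g} (hp : TCent g (g.comp f) p) :
    TCent g (g.comp f) (lmul g v p) := fun c => by
  rw [lmul_lmul, hv c, ← lmul_lmul, hp c, lmul_rmul]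

lemma cent_rmul {v : A} (hv : ∀ c : C, (g.comp f) c * v = v * (g.comp f) c)
    {p : Tsr g} (hp : TCent g (g.comp f) p) :
    TCent g (g.comp f) (rmul g v p) := fun c => by
  rw [lmul_rmul, hp c, rmul_rmul, hv c, ← rmul_rmul]

/-- The left action of `v ∈ V` on `P = (A ⊗_B A)^C`. -/
def smulL (v : Vc f g) : ↥(PCsub f g) →+ ↥(PCsub f g) :=
  AddMonoidHom.mk' (fun p => ⟨lmul g (v : A) p.1, cent_lmul f g (Vc_comm f g v.2) p.2⟩)
    (fun p q => Subtype.ext (by simp))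

/-- The right action of `v ∈ V` on `P = (A ⊗_B A)^C`. -/
def smulR (v : Vc f g) : ↥(PCsub f g) →+ ↥(PCsub f g) :=
  AddMonoidHom.mk' (fun p => ⟨rmul g (v : A) p.1, cent_rmul f g (Vc_comm f g v.2) p.2⟩)
    (fun p q => Subtype.ext (by simp))

end Extra

section Triple

open Tsr

variable {C B A : Type*} [Ring C] [Ring B] [Ring A] (f : C →+* B) (g : B →+* A)

lemma mulmap_rmul (a : A) (p : Tsr g) : mulmap g (rmul g a p) = mulmap g p * a := by
  have h : (mulmap g).comp (rmul g a) = (AddMonoidHom.mulRight a).comp (mulmap g) :=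
    thom_ext fun x y => by simp [mul_assoc]
  exact DFunLike.congr_fun h p

lemma mulmap_lmul (a : A) (p : Tsr g) : mulmap g (lmul g a p) = a * mulmap g p := by
  have h : (mulmap g).comp (lmul g a) = (AddMonoidHom.mulLeft a).comp (mulmap g) :=
    thom_ext fun x y => by simp [mul_assoc]
  exact DFunLike.congr_fun h p

/-- The triple tensor product `A ⊗_B A ⊗_B A`, realized as `(A ⊗_B A) ⊗_B A`. -/
abbrev T3 (g : B →+* A) : Type _ :=
  BT (fun b : B => rmul g (g b)) (fun b : B => AddMonoidHom.mulLeft (g b))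

/-- The generator `x ⊗_B y ⊗_B z` of the triple tensor product. -/
def mk3 (x y z : A) : T3 g := BT.mk _ _ (tmk g x y) z

lemma mk3_balL (x : A) (b : B) (y z : A) :
    mk3 g (x * g b) y z = mk3 g x (g b * y) z := by
  unfold mk3; rw [tmk_bal]

lemma mk3_balR (x y : A) (b : B) (z : A) :
    mk3 g x (y * g b) z = mk3 g x y (g b * z) := by
  have h : tmk g x (y * g b) = rmul g (g b) (tmk g x y) := by rw [rmul_mk]
  unfold mk3; rw [h]
  exact BT.mk_bal b (tmk g x y) z

/-- Left multiplication by `a ∈ A` on the first factor of the triple tensor product. -/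
def lmul3 (a : A) : T3 g →+ T3 g :=
  BT.lift _ _ (fun q z => BT.mk _ _ (lmul g a q) z)
    (fun q q' z => by rw [map_add, BT.mk_add_left])
    (fun q z z' => by rw [BT.mk_add_right])
    (fun b q z => by rw [lmul_rmul]; exact BT.mk_bal b _ z)

@[simp] lemma lmul3_mk3 (a x y z : A) : lmul3 g a (mk3 g x y z) = mk3 g (a * x) y z := by
  unfold lmul3 mk3
  rw [BT.lift_mk, lmul_mk]

/-- Right multiplication by `a ∈ A` on the last factor of the triple tensor product. -/
def rmul3 (a : A) : T3 g →+ T3 g :=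
  BT.lift _ _ (fun q z => BT.mk _ _ q (z * a))
    (fun q q' z => by rw [BT.mk_add_left])
    (fun q z z' => by rw [add_mul, BT.mk_add_right])
    (fun b q z => by
      try dsimp only
      rw [show (AddMonoidHom.mulLeft (g b)) z * a = g b * (z * a) by
        simp [mul_assoc]]
      exact BT.mk_bal b q (z * a))

@[simp] lemma rmul3_mk3 (a x y z : A) : rmul3 g a (mk3 g x y z) = mk3 g x y (z * a) := by
  unfold rmul3 mk3
  rw [BT.lift_mk]

/-- `t ∈ (A ⊗_B A ⊗_B A)^C`, the `C`-centralizer condition. -/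
def Central3 (t : T3 g) : Prop :=
  ∀ c : C, lmul3 g ((g.comp f) c) t = rmul3 g ((g.comp f) c) t

end Triple

section Theta

open Tsr

variable {C B A : Type*} [Ring C] [Ring B] [Ring A] (f : C →+* B) (g : B →+* A)

/-- Auxiliary map: for fixed `x, y`, sends `u ⊗ v ↦ x ⊗ (y u) ⊗ v`. -/
def inmap (x y : A) : Tsr g →+ T3 g :=
  tlift g (fun u v => BT.mk _ _ (tmk g x (y * u)) v)
    (fun u u' v => by rw [mul_add, tmk_add_right, BT.mk_add_left])
    (fun u v v' => by rw [BT.mk_add_right])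
    (fun u b v => by
      try dsimp only
      rw [show tmk g x (y * (u * g b)) = rmul g (g b) (tmk g x (y * u)) by
        rw [rmul_mk, mul_assoc]]
      exact BT.mk_bal b _ v)

@[simp] lemma inmap_mk (x y u v : A) :
    inmap g x y (tmk g u v) = mk3 g x (y * u) v :=
  tlift_mk g _ _ _ _ u v

/-- The map `(A ⊗_B A) × (A ⊗_B A) → A ⊗_B A ⊗_B A`,
`(p, p') ↦ p¹ ⊗ p² p'¹ ⊗ p'²`, as an iterated additive homomorphism. -/
def theta2 : Tsr g →+ (Tsr g →+ T3 g) :=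
  tlift g (fun x y => inmap g x y)
    (fun x x' y => thom_ext fun u v => by
      simp only [inmap_mk, AddMonoidHom.add_apply]
      unfold mk3; rw [tmk_add_left, BT.mk_add_left])
    (fun x y y' => thom_ext fun u v => by
      simp only [inmap_mk, AddMonoidHom.add_apply, add_mul]
      unfold mk3; rw [tmk_add_right, BT.mk_add_left])
    (fun x b y => thom_ext fun u v => by
      simp only [inmap_mk]
      rw [mk3_balL, mul_assoc])

@[simp] lemma theta2_mk (x y u v : A) :
    theta2 g (tmk g x y) (tmk g u v) = mk3 g x (y * u) v := by
  unfold theta2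
  rw [tlift_mk, inmap_mk]

lemma theta2_bal (w : A) (q q' : Tsr g) :
    theta2 g (rmul g w q) q' = theta2 g q (lmul g w q') := by
  induction q using BT.ind with
  | zero => show theta2 g (rmul g w (0 : Tsr g)) q' = theta2 g (0 : Tsr g) (lmul g w q'); simp
  | neg q ih =>
      exact (fun (q : Tsr g) (ih : theta2 g (rmul g w q) q' = theta2 g q (lmul g w q')) =>
        (by simp only [map_neg, AddMonoidHom.neg_apply, ih] :
          theta2 g (rmul g w (-q)) q' = theta2 g (-q) (lmul g w q'))) q ih
  | add q q'' ih ih' =>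
      exact (fun (q q'' : Tsr g) (ih : theta2 g (rmul g w q) q' = theta2 g q (lmul g w q'))
          (ih' : theta2 g (rmul g w q'') q' = theta2 g q'' (lmul g w q')) =>
        (by simp only [map_add, AddMonoidHom.add_apply, ih, ih'] :
          theta2 g (rmul g w (q + q'')) q' = theta2 g (q + q'') (lmul g w q'))) q q'' ih ih'
  | mk' x y =>
      induction q' using BT.ind with
      | zero =>
          show theta2 g (rmul g w (tmk g x y)) (0 : Tsr g)
            = theta2 g (tmk g x y) (lmul g w (0 : Tsr g)); simp
      | neg r ih =>
          exact (fun (r : Tsr g) (ih : theta2 g (rmul g w (tmk g x y)) r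
              = theta2 g (tmk g x y) (lmul g w r)) =>
            (by simp only [map_neg, ih] : theta2 g (rmul g w (tmk g x y)) (-r)
              = theta2 g (tmk g x y) (lmul g w (-r)))) r ih
      | add r r' ih ih' =>
          exact (fun (r r' : Tsr g) (ih : theta2 g (rmul g w (tmk g x y)) r
              = theta2 g (tmk g x y) (lmul g w r))
              (ih' : theta2 g (rmul g w (tmk g x y)) r' = theta2 g (tmk g x y) (lmul g w r')) =>
            (by simp only [map_add, ih, ih'] : theta2 g (rmul g w (tmk g x y)) (r + r')
              = theta2 g (tmk g x y) (lmul g w (r + r')))) r r' ih ih'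
      | mk' u v =>
          show theta2 g (rmul g w (tmk g x y)) (tmk g u v)
            = theta2 g (tmk g x y) (lmul g w (tmk g u v))
          rw [rmul_mk, lmul_mk, theta2_mk, theta2_mk, mul_assoc]

/-- The tensor product `P ⊗_V P` over the centralizer `V`, where
`P = (A ⊗_B A)^C`. -/
abbrev QP (f : C →+* B) (g : B →+* A) : Type _ :=
  BT (fun v : Vc f g => smulR f g v) (fun v : Vc f g => smulL f g v)

/-- The canonical map `P ⊗_V P → (A ⊗_B A ⊗_B A)`,
`p ⊗ p' ↦ p¹ ⊗ p² p'¹ ⊗ p'²`. -/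
def ThetaMap : QP f g →+ T3 g :=
  BT.lift _ _ (fun p p' => theta2 g p.1 p'.1)
    (fun p p' q => by
      try dsimp only
      rw [AddSubgroup.coe_add, map_add, AddMonoidHom.add_apply])
    (fun p q q' => by
      try dsimp only
      rw [AddSubgroup.coe_add, map_add])
    (fun v p p' => by
      try dsimp only
      exact theta2_bal g (v : A) p.1 p'.1)

/-- For `γ ∈ End_B A_C`, the map `A ⊗_B A ⊗_B A → A ⊗_B A`,
`x ⊗ y ⊗ z ↦ x ⊗ y γ(z)`. -/
def stuffMap (γ : A →+ A) (hγ : ∀ (b : B) (x : A), γ (g b * x) = g b * γ x) :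
    T3 g →+ Tsr g :=
  BT.lift _ _ (fun q z => rmul g (γ z) q)
    (fun q q' z => by rw [map_add])
    (fun q z z' => by rw [map_add, rmul_add_smul])
    (fun b q z => by
      try dsimp only
      rw [rmul_rmul, show γ ((AddMonoidHom.mulLeft (g b)) z) = g b * γ z from hγ b z])

end Theta

/-!
Write `θ(p, q) = p¹ ⊗ p²q¹ ⊗ q²`, `σ_i(t) = t¹ ⊗ t²γ_i(t³)` and `φ_i(q) = q¹γ_i(q²)`.
The quasibasis identity `x ⊗ y = ∑ x γ_i(y) u_i` gives `∑ θ(σ_i t, u_i) = t` for every `t`,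
so `Ψ t = ∑ σ_i t ⊗_V u_i` is a right inverse of `Θ` on `C`-central elements. It is also a
left inverse: `σ_i θ(p, p') = p φ_i(p')` with `φ_i(p') ∈ V` when `p'` is `C`-central, so
these coefficients cross `⊗_V` and `Ψ Θ(p ⊗ p') = p ⊗ ∑ φ_i(p') u_i = p ⊗ p'`.
-/

namespace BT

variable {R M N : Type*} [AddCommGroup M] [AddCommGroup N]
variable {rho : R → M →+ M} {lam : R → N →+ N}

def mkHom : M →+ N →+ BT rho lam :=
  AddMonoidHom.mk' (fun m => AddMonoidHom.mk' (mk rho lam m) (mk_add_right m))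
    fun m m' => AddMonoidHom.ext fun n => mk_add_left m m' n

@[simp] lemma mkHom_apply (m : M) (n : N) : mkHom m n = mk rho lam m n := rfl

end BT

namespace Tsr

variable {B A P : Type*} [Ring B] [Ring A] [AddCommGroup P] (g : B →+* A)

lemma hom₂_ext {F G : Tsr g →+ Tsr g →+ P}
    (h : ∀ x y u v, F (tmk g x y) (tmk g u v) = G (tmk g x y) (tmk g u v)) : F = G :=
  thom_ext fun x y => thom_ext fun u v => h x y u v

def lmulHom : A →+ Tsr g →+ Tsr g :=
  AddMonoidHom.mk' (lmul g) fun a a' => AddMonoidHom.ext (lmul_add_smul g a a')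

def rmulHom : A →+ Tsr g →+ Tsr g :=
  AddMonoidHom.mk' (rmul g) fun a a' => AddMonoidHom.ext (rmul_add_smul g a a')

@[simp] lemma lmulHom_apply (a : A) (p : Tsr g) : lmulHom g a p = lmul g a p := rfl

@[simp] lemma rmulHom_apply (a : A) (p : Tsr g) : rmulHom g a p = rmul g a p := rfl

end Tsr

section Naturality

open Tsr

variable {B A : Type*} [Ring B] [Ring A] (g : B →+* A)

@[simp] lemma lmul3_mk (a : A) (q : Tsr g) (z : A) :
    lmul3 g a (BT.mk _ _ q z) = BT.mk _ _ (lmul g a q) z :=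
  BT.lift_mk _ _ _ _ q z

@[simp] lemma rmul3_mk (a : A) (q : Tsr g) (z : A) :
    rmul3 g a (BT.mk _ _ q z) = BT.mk _ _ q (z * a) :=
  BT.lift_mk _ _ _ _ q z

lemma theta2_lmul (a : A) (p q : Tsr g) :
    theta2 g (lmul g a p) q = lmul3 g a (theta2 g p q) := by
  have h : (theta2 g).comp (lmul g a) = (theta2 g).compr₂ (lmul3 g a) :=
    hom₂_ext g fun x y u v => by simp
  exact DFunLike.congr_fun (DFunLike.congr_fun h p) q

lemma theta2_rmul (a : A) (p q : Tsr g) :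
    theta2 g p (rmul g a q) = rmul3 g a (theta2 g p q) := by
  have h : (theta2 g).compl₂ (rmul g a) = (theta2 g).compr₂ (rmul3 g a) :=
    hom₂_ext g fun x y u v => by simp
  exact DFunLike.congr_fun (DFunLike.congr_fun h p) q

lemma theta2_tmk_one (q : Tsr g) (z : A) : theta2 g q (tmk g 1 z) = BT.mk _ _ q z := by
  have h : (theta2 g).flip (tmk g 1 z) = BT.mkHom.flip z :=
    thom_ext fun x y => by simp [mk3]
  exact DFunLike.congr_fun h q

variable (γ : A →+ A) (hγ : ∀ (b : B) (x : A), γ (g b * x) = g b * γ x)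

@[simp] lemma phiMap_tmk (x y : A) : phiMap g γ hγ (tmk g x y) = x * γ y :=
  tlift_mk g _ _ _ _ x y

@[simp] lemma stuffMap_mk (q : Tsr g) (z : A) :
    stuffMap g γ hγ (BT.mk _ _ q z) = rmul g (γ z) q :=
  BT.lift_mk _ _ _ _ q z

lemma phiMap_lmul (a : A) (p : Tsr g) : phiMap g γ hγ (lmul g a p) = a * phiMap g γ hγ p := by
  have h : (phiMap g γ hγ).comp (lmul g a) = (AddMonoidHom.mulLeft a).comp (phiMap g γ hγ) :=
    thom_ext fun x y => by simp [mul_assoc]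
  exact DFunLike.congr_fun h p

lemma phiMap_rmul {a : A} (ha : ∀ x, γ (x * a) = γ x * a) (p : Tsr g) :
    phiMap g γ hγ (rmul g a p) = phiMap g γ hγ p * a := by
  have h : (phiMap g γ hγ).comp (rmul g a) = (AddMonoidHom.mulRight a).comp (phiMap g γ hγ) :=
    thom_ext fun x y => by simp [ha, mul_assoc]
  exact DFunLike.congr_fun h p

lemma stuffMap_lmul3 (a : A) (t : T3 g) :
    stuffMap g γ hγ (lmul3 g a t) = lmul g a (stuffMap g γ hγ t) := by
  have h : (stuffMap g γ hγ).comp (lmul3 g a) = (lmul g a).comp (stuffMap g γ hγ) :=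
    BT.hom_ext fun q z => by simp [lmul_rmul]
  exact DFunLike.congr_fun h t

lemma stuffMap_rmul3 {a : A} (ha : ∀ x, γ (x * a) = γ x * a) (t : T3 g) :
    stuffMap g γ hγ (rmul3 g a t) = rmul g a (stuffMap g γ hγ t) := by
  have h : (stuffMap g γ hγ).comp (rmul3 g a) = (rmul g a).comp (stuffMap g γ hγ) :=
    BT.hom_ext fun q z => by simp [ha, rmul_rmul]
  exact DFunLike.congr_fun h t

lemma stuffMap_theta2 (p q : Tsr g) :
    stuffMap g γ hγ (theta2 g p q) = rmul g (phiMap g γ hγ q) p := by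
  have h : (theta2 g).compr₂ (stuffMap g γ hγ) = ((rmulHom g).comp (phiMap g γ hγ)).flip :=
    hom₂_ext g fun x y u v => by simp [mk3, mul_assoc]
  exact DFunLike.congr_fun (DFunLike.congr_fun h p) q

end Naturality

section Quasibasis

open Tsr

variable {B A : Type*} [Ring B] [Ring A] (g : B →+* A) {n : ℕ} {γ : Fin n → (A →+ A)}
  (hγ : ∀ i (b : B) (x : A), γ i (g b * x) = g b * γ i x) {u : Fin n → Tsr g}
  (hqb : ∀ x y : A, tmk g x y = ∑ i, lmul g (x * γ i y) (u i))
include hqb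

lemma sum_lmul_phiMap (p : Tsr g) : ∑ i, lmul g (phiMap g (γ i) (hγ i) p) (u i) = p := by
  have h : ∑ i, ((lmulHom g).flip (u i)).comp (phiMap g (γ i) (hγ i)) = AddMonoidHom.id _ :=
    thom_ext fun x y => by simpa using (hqb x y).symm
  simpa using DFunLike.congr_fun h p

lemma sum_theta2_stuffMap (t : T3 g) : ∑ i, theta2 g (stuffMap g (γ i) (hγ i) t) (u i) = t := by
  have h : ∑ i, ((theta2 g).flip (u i)).comp (stuffMap g (γ i) (hγ i)) = AddMonoidHom.id _ :=
    BT.hom_ext fun q z => by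
      have hz : ∑ i, lmul g (γ i z) (u i) = tmk g 1 z := by simpa using (hqb 1 z).symm
      simp only [AddMonoidHom.finsetSum_apply, AddMonoidHom.comp_apply,
        AddMonoidHom.flip_apply, stuffMap_mk, theta2_bal, AddMonoidHom.id_apply]
      rw [← map_sum, hz, theta2_tmk_one]
  simpa using DFunLike.congr_fun h t

end Quasibasis

section Centralizers

open Tsr

variable {C B A : Type*} [Ring C] [Ring B] [Ring A] (f : C →+* B) (g : B →+* A)

def T3Csub : AddSubgroup (T3 g) where
  carrier := {t | Central3 f g t}
  add_mem' := fun ht ht' c => by simp only [map_add, ht c, ht' c]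
  zero_mem' := fun c => by simp
  neg_mem' := fun ht c => by simp only [map_neg, ht c]

@[simp] lemma mem_T3Csub {t : T3 g} : t ∈ T3Csub f g ↔ Central3 f g t := Iff.rfl

lemma central3_theta2 {p q : Tsr g} (hp : TCent g (g.comp f) p) (hq : TCent g (g.comp f) q) :
    Central3 f g (theta2 g p q) := fun c => by
  rw [← theta2_lmul, hp c, theta2_bal, hq c, theta2_rmul]

@[simp] lemma ThetaMap_mk (p q : PCsub f g) : ThetaMap f g (BT.mk _ _ p q) = theta2 g p q :=
  BT.lift_mk _ _ _ _ p q

lemma ThetaMap_mem_T3Csub (ξ : QP f g) : ThetaMap f g ξ ∈ T3Csub f g := by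
  induction ξ using BT.ind with
  | zero => simp
  | mk' p q => simpa using central3_theta2 f g p.2 q.2
  | neg ξ h => simpa using (T3Csub f g).neg_mem h
  | add ξ η hξ hη => simpa using (T3Csub f g).add_mem hξ hη

lemma tcent_stuffMap {γ : A →+ A} (hγ : EndBAC g (g.comp f) γ) {t : T3 g}
    (ht : Central3 f g t) : TCent g (g.comp f) (stuffMap g γ hγ.1 t) := fun c => by
  rw [← stuffMap_lmul3, ht c, stuffMap_rmul3 g γ hγ.1 (fun x => hγ.2 x c)]

lemma phiMap_mem_Vc {γ : A →+ A} (hγ : EndBAC g (g.comp f) γ) {p : Tsr g}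
    (hp : TCent g (g.comp f) p) : phiMap g γ hγ.1 p ∈ Vc f g := by
  rw [Vc, Subring.mem_centralizer_iff]
  rintro _ ⟨c, rfl⟩
  rw [← phiMap_lmul, hp c, phiMap_rmul g γ hγ.1 (fun x => hγ.2 x c)]

def ThetaMapC : QP f g →+ T3Csub f g :=
  (ThetaMap f g).codRestrict _ (ThetaMap_mem_T3Csub f g)

@[simp] lemma coe_ThetaMapC (ξ : QP f g) : (ThetaMapC f g ξ : T3 g) = ThetaMap f g ξ := rfl

def stuffMapC {γ : A →+ A} (hγ : EndBAC g (g.comp f) γ) : T3Csub f g →+ PCsub f g :=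
  ((stuffMap g γ hγ.1).comp (T3Csub f g).subtype).codRestrict _ fun t =>
    tcent_stuffMap f g hγ t.2

@[simp] lemma coe_stuffMapC {γ : A →+ A} (hγ : EndBAC g (g.comp f) γ) (t : T3Csub f g) :
    (stuffMapC f g hγ t : Tsr g) = stuffMap g γ hγ.1 t := rfl

variable {f g} {n : ℕ} {γ : Fin n → (A →+ A)} {u : Fin n → Tsr g}
  (hγ : ∀ i, EndBAC g (g.comp f) (γ i)) (hu : ∀ i, TCent g (g.comp f) (u i))

def thetaInv : T3Csub f g →+ QP f g :=
  ∑ i, (BT.mkHom.flip ⟨u i, hu i⟩).comp (stuffMapC f g (hγ i))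

lemma thetaInv_apply (t : T3Csub f g) :
    thetaInv hγ hu t = ∑ i, BT.mk _ _ (stuffMapC f g (hγ i) t) ⟨u i, hu i⟩ := by
  simp [thetaInv]

variable (hqb : ∀ x y : A, tmk g x y = ∑ i, lmul g (x * γ i y) (u i))
include hqb

lemma thetaInv_comp_ThetaMapC : (thetaInv hγ hu).comp (ThetaMapC f g) = AddMonoidHom.id _ :=
  BT.hom_ext fun p q => by
    let φ : Fin n → Vc f g := fun i => ⟨phiMap g (γ i) (hγ i).1 q, phiMap_mem_Vc f g (hγ i) q.2⟩
    rw [AddMonoidHom.comp_apply, thetaInv_apply, AddMonoidHom.id_apply]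
    calc ∑ i, BT.mk _ _ (stuffMapC f g (hγ i) (ThetaMapC f g (BT.mk _ _ p q))) ⟨u i, hu i⟩
        = ∑ i, BT.mk _ _ (smulR f g (φ i) p) ⟨u i, hu i⟩ := by
          congr! 2 with i
          apply Subtype.ext
          rw [coe_stuffMapC, coe_ThetaMapC, ThetaMap_mk, stuffMap_theta2]
          rfl
      _ = ∑ i, BT.mk _ _ p (smulL f g (φ i) ⟨u i, hu i⟩) :=
          Finset.sum_congr rfl fun i _ => BT.mk_bal (φ i) p _
      _ = BT.mk _ _ p (∑ i, smulL f g (φ i) ⟨u i, hu i⟩) :=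
          (map_sum (BT.mkHom p : PCsub f g →+ QP f g) _ _).symm
      _ = BT.mk _ _ p q := by
          congr 1
          apply Subtype.ext
          simpa [smulL] using sum_lmul_phiMap g (fun i => (hγ i).1) hqb q

lemma ThetaMapC_comp_thetaInv : (ThetaMapC f g).comp (thetaInv hγ hu) = AddMonoidHom.id _ :=
  AddMonoidHom.ext fun t => Subtype.ext <| by
    simpa [thetaInv_apply] using
      sum_theta2_stuffMap g (fun i => (hγ i).1) hqb t

def thetaEquiv : QP f g ≃+ T3Csub f g :=
  (ThetaMapC f g).toAddEquiv (thetaInv hγ hu) (thetaInv_comp_ThetaMapC hγ hu hqb)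
    (ThetaMapC_comp_thetaInv hγ hu hqb)

end Centralizers

/-- Let `A|B|C` be a right depth three tower of rings with
quasibases `γ_i`, `u_i`, `V = A^C` and `P = (A ⊗_B A)^C`.  Then
`p ⊗ p' ↦ p¹ ⊗ p² p'¹ ⊗ p'²` gives an isomorphism of abelian groups
`P ⊗_V P ≅ (A ⊗_B A ⊗_B A)^C`, with inverse
`q¹ ⊗ q² ⊗ q³ ↦ ∑ i (q¹ ⊗ q² γ_i(q³)) ⊗_V u_i`. -/
theorem PC_tensor_PC_iso_triple_centralizer {C B A : Type*} [Ring C] [Ring B] [Ring A]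
    (f : C →+* B) (g : B →+* A) (n : ℕ) (γ : Fin n → (A →+ A)) (u : Fin n → Tsr g)
    (hγ : ∀ i, EndBAC g (g.comp f) (γ i)) (hu : ∀ i, TCent g (g.comp f) (u i))
    (hqb : ∀ x y : A, tmk g x y = ∑ i, lmul g (x * γ i y) (u i)) :
    (∀ p p' : ↥(PCsub f g), Central3 f g (ThetaMap f g (BT.mk _ _ p p'))) ∧
    Function.Injective ⇑(ThetaMap f g) ∧
    (∀ t : T3 g, Central3 f g t → ∃ q : QP f g, ThetaMap f g q = t) ∧
    (∀ (i : Fin n) (t : T3 g), Central3 f g t →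
        TCent g (g.comp f) (stuffMap g (γ i) (hγ i).1 t)) ∧
    (∀ t : T3 g, Central3 f g t → ∀ ps : Fin n → ↥(PCsub f g),
        (∀ i, (ps i : Tsr g) = stuffMap g (γ i) (hγ i).1 t) →
        ThetaMap f g (∑ i, BT.mk _ _ (ps i) (⟨u i, hu i⟩ : ↥(PCsub f g))) = t) := by
  let e := thetaEquiv hγ hu hqb
  refine ⟨fun p p' => ThetaMap_mem_T3Csub f g _, fun ξ η h => e.injective (Subtype.ext h),
    fun t ht => ?_, fun i t ht => tcent_stuffMap f g (hγ i) ht, fun t _ ps hps => ?_⟩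
  · obtain ⟨ξ, hξ⟩ := e.surjective ⟨t, ht⟩
    exact ⟨ξ, congrArg Subtype.val hξ⟩
  · simp only [map_sum, ThetaMap_mk, hps]
    exact sum_theta2_stuffMap g (fun i => (hγ i).1) hqb t
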